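/- For p ≥ 3, the dual mutual-visibility number of the Sierpiński graph S_p^2 equals p, and there are exactly p + 1 maximum dual mutual-visibility sets, namely the p vertex sets of the subgraphs iS_p^1 = {(i,j) : j ∈ [p]_0} and the diagonal {(i,i) : i ∈ [p]_0}. -/

import Mathlib

/-!
Distinct rows `i`, `k` of `S_p^2` are joined by the single edge `(i,k) ~ (k,i)`, so a shortest
path from row `i` to row `k` crosses it, and (except between `(i,m)` and `(k,m)`) it is the only
shortest path. A bridge vertex in `X` therefore blocks the two ends of such a path, and duality
forces exactly one of them into `X`. Starting from an off-diagonal `(a,b) ∈ X`, these constraints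
first exclude `(b,a)`, then put all of row `a` into `X`, and finally, with the help of a third
index (`p ≥ 3`), keep every other vertex out. Otherwise `X` lies in the diagonal. Conversely, a row
or the diagonal contains no bridge vertex separating two vertices that are both in it or both
outside it.
-/

open SimpleGraph

/-- A walk is a shortest path: it is a path whose length equals the graph distance. -/
def IsShortest {V : Type*} (G : SimpleGraph V) {u v : V} (p : G.Walk u v) : Prop :=
  p.IsPath ∧ p.length = G.dist u v

/-- `u` and `v` are `X`-visible: some shortest `u,v`-path meets `X` only in `{u,v}`. -/
def Visible {V : Type*} (G : SimpleGraph V) (X : Set V) (u v : V) : Prop :=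
  ∃ p : G.Walk u v, IsShortest G p ∧ ∀ w ∈ p.support, w ∈ X → w = u ∨ w = v

/-- `u` and `v` are `X`-positionable: every shortest `u,v`-path meets `X` only in `{u,v}`. -/
def Positionable {V : Type*} (G : SimpleGraph V) (X : Set V) (u v : V) : Prop :=
  ∀ p : G.Walk u v, IsShortest G p → ∀ w ∈ p.support, w ∈ X → w = u ∨ w = v

def MutualVisibilitySet {V : Type*} (G : SimpleGraph V) (X : Set V) : Prop :=
  ∀ u ∈ X, ∀ v ∈ X, Visible G X u v

def TotalMVSet {V : Type*} (G : SimpleGraph V) (X : Set V) : Prop :=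
  ∀ u v : V, Visible G X u v

def OuterMVSet {V : Type*} (G : SimpleGraph V) (X : Set V) : Prop :=
  MutualVisibilitySet G X ∧ ∀ u ∈ X, ∀ v ∉ X, Visible G X u v

def DualMVSet {V : Type*} (G : SimpleGraph V) (X : Set V) : Prop :=
  MutualVisibilitySet G X ∧ ∀ u ∉ X, ∀ v ∉ X, Visible G X u v

def GeneralPositionSet {V : Type*} (G : SimpleGraph V) (X : Set V) : Prop :=
  ∀ u ∈ X, ∀ v ∈ X, Positionable G X u v

def TotalGPSet {V : Type*} (G : SimpleGraph V) (X : Set V) : Prop :=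
  ∀ u v : V, Positionable G X u v

def OuterGPSet {V : Type*} (G : SimpleGraph V) (X : Set V) : Prop :=
  GeneralPositionSet G X ∧ ∀ u ∈ X, ∀ v ∉ X, Positionable G X u v

def DualGPSet {V : Type*} (G : SimpleGraph V) (X : Set V) : Prop :=
  GeneralPositionSet G X ∧ ∀ u ∉ X, ∀ v ∉ X, Positionable G X u v

/-- The maximum cardinality of a set of vertices satisfying `P`. -/
noncomputable def maxCard {V : Type*} (P : Set V → Prop) : ℕ :=
  sSup {n : ℕ | ∃ X : Set V, P X ∧ X.ncard = n}

/-- The number of sets achieving `maxCard P`. -/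
noncomputable def numMaxSets {V : Type*} (P : Set V → Prop) : ℕ :=
  {X : Set V | P X ∧ X.ncard = maxCard P}.ncard

/-- A vertex is simplicial if its neighborhood induces a complete graph. -/
def Simplicial {V : Type*} (G : SimpleGraph V) (v : V) : Prop :=
  ∀ u w : V, G.Adj v u → G.Adj v w → u ≠ w → G.Adj u w

/-- A set of vertices is convex: every shortest path between its vertices stays inside it. -/
def ConvexSet {V : Type*} (G : SimpleGraph V) (S : Set V) : Prop :=
  ∀ u ∈ S, ∀ v ∈ S, ∀ p : G.Walk u v, IsShortest G p → ∀ w ∈ p.support, w ∈ S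

/-- The Sierpiński graph `S_p^2` on vertex set `[p]_0 × [p]_0`:
`(i,j) ~ (i,j')` for `j ≠ j'`, and `(i,j) ~ (j,i)` for `i ≠ j`. -/
def SP2 (p : ℕ) : SimpleGraph (Fin p × Fin p) where
  Adj u v := (u.1 = v.1 ∧ u.2 ≠ v.2) ∨ (v.1 = u.2 ∧ v.2 = u.1 ∧ u.1 ≠ u.2)
  symm := ⟨by
    rintro ⟨a, b⟩ ⟨c, d⟩ (⟨h1, h2⟩ | ⟨h1, h2, h3⟩) <;> simp_all <;> tauto⟩
  loopless := ⟨by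
    rintro ⟨a, b⟩ (⟨h1, h2⟩ | ⟨h1, h2, h3⟩) <;> simp_all⟩


section Visibility

variable {V : Type*} {G : SimpleGraph V} {X : Set V} {u v w : V}

lemma two_le_dist (hr : G.Reachable u v) (hne : u ≠ v) (hnadj : ¬ G.Adj u v) :
    2 ≤ G.dist u v := by
  have h0 : G.dist u v ≠ 0 := dist_ne_zero_iff_ne_and_reachable.mpr ⟨hne, hr⟩
  have h1 : G.dist u v ≠ 1 := fun h => hnadj (dist_eq_one_iff_adj.mp h)
  omega

lemma three_le_dist (hr : G.Reachable u v) (hne : u ≠ v) (hnadj : ¬ G.Adj u v)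
    (hno : ∀ w, G.Adj u w → ¬ G.Adj w v) : 3 ≤ G.dist u v := by
  have h : 2 < G.edist u v := two_lt_edist_iff.mpr
    ⟨hne, hnadj, Set.eq_empty_iff_forall_notMem.mpr fun w hw => hno w hw.1 hw.2.symm⟩
  rw [← hr.coe_dist_eq_edist] at h
  exact_mod_cast h

lemma visible_of_walk (q : G.Walk u v) (hlen : q.length ≤ G.dist u v)
    (hX : ∀ w ∈ q.support, w ∈ X → w = u ∨ w = v) : Visible G X u v :=
  have hlen : q.length = G.dist u v := le_antisymm hlen (dist_le q)
  ⟨q, ⟨q.isPath_of_length_eq_dist hlen, hlen⟩, hX⟩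

lemma visible_self : Visible G X u u :=
  visible_of_walk .nil (by simp) (by simp)

lemma visible_of_adj (h : G.Adj u v) : Visible G X u v :=
  visible_of_walk h.toWalk (by simp [dist_eq_one_iff_adj.mpr h]) (by simp)

lemma visible_of_adj_adj (hd : 2 ≤ G.dist u v) (huw : G.Adj u w) (hwv : G.Adj w v)
    (hw : w ∉ X) : Visible G X u v := by
  refine visible_of_walk (.cons huw (.cons hwv .nil)) (by simpa using hd) ?_
  rintro x hx hxX
  simp only [Walk.support_cons, Walk.support_nil, List.mem_cons, List.not_mem_nil, or_false] at hx
  rcases hx with rfl | rfl | rfl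
  exacts [Or.inl rfl, absurd hxX hw, Or.inr rfl]

lemma visible_of_adj_adj_adj {w' : V} (hd : 3 ≤ G.dist u v) (huw : G.Adj u w)
    (hww' : G.Adj w w') (hw'v : G.Adj w' v) (hw : w ∉ X) (hw' : w' ∉ X) :
    Visible G X u v := by
  refine visible_of_walk (.cons huw (.cons hww' (.cons hw'v .nil))) (by simpa using hd) ?_
  rintro x hx hxX
  simp only [Walk.support_cons, Walk.support_nil, List.mem_cons, List.not_mem_nil, or_false] at hx
  rcases hx with rfl | rfl | rfl | rfl
  exacts [Or.inl rfl, absurd hxX hw, absurd hxX hw', Or.inr rfl]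

lemma not_visible_of_mem_support (hwX : w ∈ X) (hwu : w ≠ u) (hwv : w ≠ v)
    (h : ∀ q : G.Walk u v, IsShortest G q → w ∈ q.support) : ¬ Visible G X u v := by
  rintro ⟨q, hq, hqX⟩
  rcases hqX w (h q hq) hwX with rfl | rfl
  exacts [hwu rfl, hwv rfl]

lemma DualMVSet.mem_iff_notMem_of_not_visible (hX : DualMVSet G X)
    (h : ¬ Visible G X u v) : u ∈ X ↔ v ∉ X :=
  ⟨fun hu hv => h (hX.1 u hu v hv), fun hv => by_contra fun hu => h (hX.2 u hu v hv)⟩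

end Visibility

lemma maxCard_eq {V : Type*} {P : Set V → Prop} {n : ℕ} (h : ∃ X, P X ∧ X.ncard = n)
    (hle : ∀ X, P X → X.ncard ≤ n) : maxCard P = n :=
  IsGreatest.csSup_eq ⟨h, by rintro _ ⟨X, hX, rfl⟩; exact hle X hX⟩

namespace SP2

variable {p : ℕ} {i j k l : Fin p}

lemma adj_iff {a b c d : Fin p} :
    (SP2 p).Adj (a, b) (c, d) ↔ (a = c ∧ b ≠ d) ∨ (c = b ∧ d = a ∧ a ≠ b) :=
  Iff.rfl

lemma adj_of_snd_ne (hjk : j ≠ k) : (SP2 p).Adj (i, j) (i, k) :=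
  Or.inl ⟨rfl, hjk⟩

lemma adj_swap (hij : i ≠ j) : (SP2 p).Adj (i, j) (j, i) :=
  Or.inr ⟨rfl, rfl, hij⟩

lemma visible_of_fst_eq {X : Set (Fin p × Fin p)} {u v : Fin p × Fin p} (h : u.1 = v.1) :
    Visible (SP2 p) X u v := by
  obtain ⟨a, b⟩ := u
  obtain ⟨c, d⟩ := v
  obtain rfl : a = c := h
  by_cases hbd : b = d
  · exact hbd ▸ visible_self
  · exact visible_of_adj (adj_of_snd_ne hbd)

lemma eq_of_adj_of_adj (hij : i ≠ j) (hli : l ≠ i) {w : Fin p × Fin p}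
    (h1 : (SP2 p).Adj (i, j) w) (h2 : (SP2 p).Adj w (j, l)) : w = (j, i) := by
  obtain ⟨a, b⟩ := w
  rw [adj_iff] at h1 h2
  rcases h1 with ⟨h1a, h1b⟩ | ⟨h1a, h1b, h1c⟩ <;>
    rcases h2 with ⟨h2a, h2b⟩ | ⟨h2a, h2b, h2c⟩ <;> simp_all

lemma not_adj_of_adj (hik : i ≠ k) (hjk : j ≠ k) (hli : l ≠ i) {w : Fin p × Fin p}
    (h1 : (SP2 p).Adj (i, j) w) : ¬ (SP2 p).Adj w (k, l) := by
  obtain ⟨a, b⟩ := w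
  rw [adj_iff] at h1 ⊢
  rcases h1 with ⟨h1a, h1b⟩ | ⟨h1a, h1b, h1c⟩ <;> grind

lemma eq_of_adj_of_adj_of_adj (hik : i ≠ k) (hjk : j ≠ k) (hli : l ≠ i) (hjl : j ≠ l)
    {w w' : Fin p × Fin p} (h1 : (SP2 p).Adj (i, j) w) (h2 : (SP2 p).Adj w w')
    (h3 : (SP2 p).Adj w' (k, l)) : w = (i, k) := by
  obtain ⟨a, b⟩ := w
  obtain ⟨c, d⟩ := w'
  rw [adj_iff] at h1 h2 h3
  rcases h1 with ⟨h1a, h1b⟩ | ⟨h1a, h1b, h1c⟩ <;>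
    rcases h2 with ⟨h2a, h2b⟩ | ⟨h2a, h2b, h2c⟩ <;>
      rcases h3 with ⟨h3a, h3b⟩ | ⟨h3a, h3b, h3c⟩ <;> simp_all [Prod.ext_iff]

lemma dist_eq_two (hij : i ≠ j) (hli : l ≠ i) : (SP2 p).dist (i, j) (j, l) = 2 := by
  have h1 := adj_swap (p := p) hij
  have h2 := adj_of_snd_ne (i := j) hli.symm
  refine le_antisymm (dist_le (.cons h1 (.cons h2 .nil))) ?_
  refine two_le_dist (h1.reachable.trans h2.reachable) (fun h => hij (congrArg Prod.fst h)) ?_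
  rintro (⟨h, -⟩ | ⟨-, h, -⟩)
  exacts [hij h, hli h]

lemma dist_eq_three (hik : i ≠ k) (hjk : j ≠ k) (hli : l ≠ i) :
    (SP2 p).dist (i, j) (k, l) = 3 := by
  have h1 := adj_of_snd_ne (p := p) (i := i) hjk
  have h2 := adj_swap (p := p) hik
  have h3 := adj_of_snd_ne (i := k) hli.symm
  refine le_antisymm (dist_le (.cons h1 (.cons h2 (.cons h3 .nil)))) ?_
  refine three_le_dist (h1.reachable.trans (h2.reachable.trans h3.reachable))
    (fun h => hik (congrArg Prod.fst h)) ?_ fun w hw => not_adj_of_adj hik hjk hli hw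
  rintro (⟨h, -⟩ | ⟨h, -⟩)
  exacts [hik h, hjk h.symm]

lemma not_visible_of_swap_mem {X : Set (Fin p × Fin p)} (hij : i ≠ j) (hli : l ≠ i)
    (hX : (j, i) ∈ X) : ¬ Visible (SP2 p) X (i, j) (j, l) := by
  refine not_visible_of_mem_support hX (fun h => hij (congrArg Prod.fst h).symm)
    (fun h => hli (congrArg Prod.snd h).symm) fun q hq => ?_
  have hlen : q.length = 2 := hq.2.trans (dist_eq_two hij hli)
  have h1 := q.adj_getVert_succ (i := 0) (by omega)
  have h2 := q.adj_getVert_succ (i := 1) (by omega)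
  rw [Walk.getVert_zero] at h1
  rw [show 1 + 1 = q.length by omega, Walk.getVert_length] at h2
  exact eq_of_adj_of_adj hij hli h1 h2 ▸ q.getVert_mem_support 1

lemma not_visible_of_mem {X : Set (Fin p × Fin p)} (hik : i ≠ k) (hjk : j ≠ k) (hli : l ≠ i)
    (hjl : j ≠ l) (hX : (i, k) ∈ X) : ¬ Visible (SP2 p) X (i, j) (k, l) := by
  refine not_visible_of_mem_support hX (fun h => hjk (congrArg Prod.snd h).symm)
    (fun h => hik (congrArg Prod.fst h)) fun q hq => ?_
  have hlen : q.length = 3 := hq.2.trans (dist_eq_three hik hjk hli)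
  have h1 := q.adj_getVert_succ (i := 0) (by omega)
  have h2 := q.adj_getVert_succ (i := 1) (by omega)
  have h3 := q.adj_getVert_succ (i := 2) (by omega)
  rw [Walk.getVert_zero] at h1
  rw [show 2 + 1 = q.length by omega, Walk.getVert_length] at h3
  exact eq_of_adj_of_adj_of_adj hik hjk hli hjl h1 h2 h3 ▸ q.getVert_mem_support 1

lemma visible_of_bridge_notMem {X : Set (Fin p × Fin p)} {u v : Fin p × Fin p}
    (h : u.1 ≠ v.1 → (u.1, v.1) ∉ X ∧ (v.1, u.1) ∉ X) : Visible (SP2 p) X u v := by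
  obtain ⟨i, j⟩ := u
  obtain ⟨k, l⟩ := v
  by_cases hik : i = k
  · exact visible_of_fst_eq hik
  obtain ⟨h1, h2⟩ := h hik
  by_cases hjk : j = k <;> by_cases hli : l = i
  · subst hjk hli
    exact visible_of_adj (adj_swap hik)
  · subst hjk
    exact visible_of_adj_adj (dist_eq_two hik hli).ge (adj_swap hik)
      (adj_of_snd_ne (Ne.symm hli)) h2
  · subst l
    have hd : (SP2 p).dist (i, j) (k, i) = 2 := dist_comm.trans (dist_eq_two (Ne.symm hik) hjk)
    exact visible_of_adj_adj hd.ge (adj_of_snd_ne hjk) (adj_swap hik) h1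
  · exact visible_of_adj_adj_adj (dist_eq_three hik hjk hli).ge (adj_of_snd_ne hjk) (adj_swap hik)
      (adj_of_snd_ne (Ne.symm hli)) h1 h2

lemma dualMVSet_row (a : Fin p) : DualMVSet (SP2 p) {v | v.1 = a} :=
  ⟨fun _ hu _ hv => visible_of_bridge_notMem fun h => (h (hu.trans hv.symm)).elim,
    fun _ hu _ hv => visible_of_bridge_notMem fun _ => ⟨hu, hv⟩⟩

lemma dualMVSet_diag : DualMVSet (SP2 p) {v | v.1 = v.2} :=
  ⟨fun _ _ _ _ => visible_of_bridge_notMem fun h => ⟨h, Ne.symm h⟩,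
    fun _ _ _ _ => visible_of_bridge_notMem fun h => ⟨h, Ne.symm h⟩⟩

lemma eq_row_of_mem {X : Set (Fin p × Fin p)} (hp : 3 ≤ p) (hX : DualMVSet (SP2 p) X)
    {a b : Fin p} (hab : a ≠ b) (habX : (a, b) ∈ X) : X = {v | v.1 = a} := by
  have hiff : ∀ {u v}, ¬ Visible (SP2 p) X u v → (u ∈ X ↔ v ∉ X) :=
    hX.mem_iff_notMem_of_not_visible
  have hba : (b, a) ∉ X := by
    intro hbaX
    have haa : (a, a) ∉ X := (hiff (not_visible_of_swap_mem hab.symm hab habX)).mp hbaX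
    have hbb : (b, b) ∉ X := (hiff (not_visible_of_swap_mem hab hab.symm hbaX)).mp habX
    exact haa ((hiff (not_visible_of_mem hab hab hab.symm hab habX)).mpr hbb)
  have hrow : ∀ l, (a, l) ∈ X := by
    intro l
    by_cases hl : l = b
    · exact hl ▸ habX
    · by_contra hal
      exact hba ((hiff (not_visible_of_swap_mem hab.symm hl habX)).mpr hal)
  ext ⟨k, c⟩
  refine ⟨fun hkc => ?_, fun hk => (show k = a from hk) ▸ hrow c⟩
  by_contra hk
  change k ≠ a at hk
  by_cases hc : c = a
  · subst hc
    exact (hiff (not_visible_of_swap_mem hk hk.symm (hrow k))).mp hkc (hrow c)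
  · obtain ⟨e, hek, hec⟩ := Fin.exists_ne_and_ne_of_two_lt k c (by omega)
    exact (hiff (not_visible_of_mem hk.symm hek hc hec (hrow k))).mp (hrow e) hkc

lemma eq_row_or_subset_diag {X : Set (Fin p × Fin p)} (hp : 3 ≤ p) (hX : DualMVSet (SP2 p) X) :
    (∃ a, X = {v | v.1 = a}) ∨ X ⊆ {v | v.1 = v.2} := by
  by_cases h : X ⊆ {v | v.1 = v.2}
  · exact Or.inr h
  · obtain ⟨⟨a, b⟩, habX, hab⟩ := Set.not_subset.mp h
    exact Or.inl ⟨a, eq_row_of_mem hp hX hab habX⟩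

lemma ncard_row (a : Fin p) : {v : Fin p × Fin p | v.1 = a}.ncard = p := by
  have : {v : Fin p × Fin p | v.1 = a} = Set.range (Prod.mk a) := by
    ext ⟨b, c⟩
    simp [eq_comm]
  rw [this, Set.ncard_range_of_injective (Prod.mk_right_injective a), Nat.card_eq_fintype_card,
    Fintype.card_fin]

lemma ncard_diag : {v : Fin p × Fin p | v.1 = v.2}.ncard = p := by
  have : {v : Fin p × Fin p | v.1 = v.2} = Set.range fun a => (a, a) := by
    ext ⟨b, c⟩
    simp [eq_comm]
  rw [this, Set.ncard_range_of_injective (fun a b h => congrArg Prod.fst h),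
    Nat.card_eq_fintype_card, Fintype.card_fin]

lemma ncard_le {X : Set (Fin p × Fin p)} (hp : 3 ≤ p) (hX : DualMVSet (SP2 p) X) :
    X.ncard ≤ p := by
  rcases eq_row_or_subset_diag hp hX with ⟨a, rfl⟩ | hsub
  · exact (ncard_row a).le
  · exact (Set.ncard_le_ncard hsub).trans_eq ncard_diag

end SP2

/-- `μ_d(S_p^2) = p`, and the maximum dual mutual-visibility sets are exactly the
`p` rows `iS_p^1` and the diagonal. -/
theorem stmt_8 (p : ℕ) (hp : 3 ≤ p) :
    maxCard (DualMVSet (SP2 p)) = p ∧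
    {X : Set (Fin p × Fin p) | DualMVSet (SP2 p) X ∧ X.ncard = p} =
      {X : Set (Fin p × Fin p) |
        (∃ i : Fin p, X = {v : Fin p × Fin p | v.1 = i}) ∨
        X = {v : Fin p × Fin p | v.1 = v.2}} := by
  refine ⟨maxCard_eq ⟨_, SP2.dualMVSet_row ⟨0, by omega⟩, SP2.ncard_row _⟩
    fun X => SP2.ncard_le hp, ?_⟩
  ext X
  refine ⟨fun ⟨hX, hcard⟩ => ?_, ?_⟩
  · refine (SP2.eq_row_or_subset_diag hp hX).imp_right fun hsub => ?_
    exact Set.eq_of_subset_of_ncard_le hsub (by rw [SP2.ncard_diag, hcard])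
  · rintro (⟨a, rfl⟩ | rfl)
    exacts [⟨SP2.dualMVSet_row a, SP2.ncard_row a⟩, ⟨SP2.dualMVSet_diag, SP2.ncard_diag⟩]
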